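/- arXiv:1305.2861 — 5 statements merged into one kernel-verified Lean document; each statement's English description precedes it below -/
import Mathlib

section
/- Let Y, U, W ∈ V with Y ≠ 0. Then the fundamental tensor of the Matsumoto metric satisfies g_Y(U,W) = (√⟨Y,Y⟩ − ⟨X,Y⟩)^{-2}·{4⟨Y,U⟩⟨Y,W⟩ + 2⟨Y,Y⟩⟨U,W⟩} + (√⟨Y,Y⟩ − ⟨X,Y⟩)^{-4}·{ −4⟨Y,Y⟩⟨Y,U⟩⟨Y,W⟩ + ⟨Y,Y⟩^{3/2}(⟨Y,W⟩⟨U,X⟩ + ⟨Y,U⟩⟨W,X⟩) + ⟨Y,Y⟩²(3⟨U,X⟩⟨W,X⟩ − ⟨U,W⟩) + √⟨Y,Y⟩·⟨Y,X⟩(7⟨Y,U⟩⟨Y,W⟩ + ⟨Y,Y⟩⟨U,W⟩) − 4⟨Y,Y⟩⟨Y,X⟩(⟨Y,W⟩⟨U,X⟩ + ⟨Y,U⟩⟨W,X⟩) }. -/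
open scoped RealInnerProductSpace

/-- The Matsumoto metric `F(y) = ⟨y,y⟩ / (√⟨y,y⟩ − ⟨X,y⟩)` associated to the
vector `X` of an inner product space. -/
noncomputable def matsumotoF {V : Type*} [NormedAddCommGroup V] [InnerProductSpace ℝ V]
    (X y : V) : ℝ :=
  ⟪y, y⟫ / (Real.sqrt ⟪y, y⟫ - ⟪X, y⟫)

/-- The fundamental tensor of the Matsumoto metric:
`g_Y(U,W) = (1/2)·∂²/∂s∂t [F²(Y + sU + tW)]` at `s = t = 0`. -/
noncomputable def matsumotoG {V : Type*} [NormedAddCommGroup V] [InnerProductSpace ℝ V]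
    (X Y U W : V) : ℝ :=
  (1 / 2) * deriv (fun s : ℝ =>
    deriv (fun t : ℝ => (matsumotoF X (Y + s • U + t • W)) ^ 2) 0) 0

/-!
On a line `p + t q` with `p ≠ 0`, `F² = ‖p‖⁴ / (‖p‖ - ⟪X, p⟫)²` is a quotient of the smooth scalar
functions `‖p + t q‖` and `⟪X, p + t q⟫`, and `‖X‖ < 1` keeps the denominator positive. Hence the
inner `t`-derivative has the closed form `dirDerivSq X p q` at every base point `p` near `Y`, and
the tensor is the `s`-derivative of that closed form along `Y + s U`, again by the quotient rule.
-/

namespace Matsumoto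

variable {V : Type*} [NormedAddCommGroup V] [InnerProductSpace ℝ V]

theorem matsumotoF_eq (X y : V) : matsumotoF X y = ‖y‖ ^ 2 / (‖y‖ - ⟪X, y⟫) := by
  rw [matsumotoF, ← norm_eq_sqrt_real_inner, real_inner_self_eq_norm_sq]

theorem norm_sub_inner_pos {X y : V} (hX : ‖X‖ < 1) (hy : y ≠ 0) : 0 < ‖y‖ - ⟪X, y⟫ := by
  have hy' : 0 < ‖y‖ := norm_pos_iff.mpr hy
  nlinarith [real_inner_le_norm X y]

theorem hasDerivAt_add_smul (p q : V) (x : ℝ) : HasDerivAt (fun t : ℝ => p + t • q) q x := by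
  simpa using ((hasDerivAt_id x).smul_const q).const_add p

theorem hasDerivAt_norm_add_smul {p : V} (q : V) (hp : p ≠ 0) :
    HasDerivAt (fun t : ℝ => ‖p + t • q‖) (⟪p, q⟫ / ‖p‖) 0 := by
  have hsq := (hasDerivAt_add_smul p q 0).norm_sq
  have hp' : ‖p‖ ≠ 0 := norm_ne_zero_iff.mpr hp
  convert hsq.sqrt (by simpa using hp') using 1
  · simp only [Real.sqrt_sq (norm_nonneg _)]
  · simp only [zero_smul, add_zero, Real.sqrt_sq (norm_nonneg _)]
    field_simp

theorem hasDerivAt_inner_add_smul_left (p q w : V) (x : ℝ) :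
    HasDerivAt (fun t : ℝ => ⟪p + t • q, w⟫) ⟪q, w⟫ x := by
  simpa using (hasDerivAt_add_smul p q x).inner ℝ (hasDerivAt_const x w)

theorem hasDerivAt_inner_add_smul_right (w p q : V) (x : ℝ) :
    HasDerivAt (fun t : ℝ => ⟪w, p + t • q⟫) ⟪w, q⟫ x := by
  simpa using (hasDerivAt_const x w).inner ℝ (hasDerivAt_add_smul p q x)

noncomputable def dirDerivSq (X p q : V) : ℝ :=
  2 * ‖p‖ ^ 2 * ((‖p‖ - 2 * ⟪X, p⟫) * ⟪p, q⟫ + ‖p‖ ^ 2 * ⟪X, q⟫) / (‖p‖ - ⟪X, p⟫) ^ 3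

theorem hasDerivAt_matsumotoF_sq_add_smul (X : V) {p : V} (q : V) (hp : p ≠ 0)
    (hD : ‖p‖ - ⟪X, p⟫ ≠ 0) :
    HasDerivAt (fun t : ℝ => matsumotoF X (p + t • q) ^ 2) (dirDerivSq X p q) 0 := by
  have hn := hasDerivAt_norm_add_smul q hp
  have hb := hasDerivAt_inner_add_smul_right X p q 0
  simp only [matsumotoF_eq]
  refine (((hn.pow 2).div (hn.sub hb) (by simpa using hD)).pow 2).congr_deriv ?_
  simp only [dirDerivSq, Pi.div_apply, Pi.sub_apply, Pi.pow_apply, zero_smul, add_zero]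
  norm_num
  field_simp
  ring

theorem deriv_matsumotoF_sq_eventuallyEq (X : V) {Y : V} (U W : V) (hY : Y ≠ 0)
    (hD : ‖Y‖ - ⟪X, Y⟫ ≠ 0) :
    (fun s : ℝ => deriv (fun t : ℝ => matsumotoF X (Y + s • U + t • W) ^ 2) 0)
      =ᶠ[nhds 0] fun s => dirDerivSq X (Y + s • U) W := by
  have hline : Continuous fun s : ℝ => Y + s • U := by fun_prop
  have hden : Continuous fun s : ℝ => ‖Y + s • U‖ - ⟪X, Y + s • U⟫ := by fun_prop
  filter_upwards [hline.continuousAt.eventually_ne (by simpa using hY),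
    hden.continuousAt.eventually_ne (by simpa using hD)] with s hs hDs
  exact (hasDerivAt_matsumotoF_sq_add_smul X W hs hDs).deriv

theorem hasDerivAt_dirDerivSq_add_smul (X : V) {Y : V} (U W : V) (hY : Y ≠ 0)
    (hD : ‖Y‖ - ⟪X, Y⟫ ≠ 0) :
    HasDerivAt (fun s : ℝ => dirDerivSq X (Y + s • U) W)
      (2 * ((‖Y‖ - ⟪X, Y⟫) ^ (-2 : ℤ) * (4 * ⟪Y, U⟫ * ⟪Y, W⟫ + 2 * ‖Y‖ ^ 2 * ⟪U, W⟫)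
        + (‖Y‖ - ⟪X, Y⟫) ^ (-4 : ℤ) *
          (- 4 * ‖Y‖ ^ 2 * ⟪Y, U⟫ * ⟪Y, W⟫
           + ‖Y‖ ^ 3 * (⟪Y, W⟫ * ⟪U, X⟫ + ⟪Y, U⟫ * ⟪W, X⟫)
           + ‖Y‖ ^ 4 * (3 * ⟪U, X⟫ * ⟪W, X⟫ - ⟪U, W⟫)
           + ‖Y‖ * ⟪Y, X⟫ * (7 * ⟪Y, U⟫ * ⟪Y, W⟫ + ‖Y‖ ^ 2 * ⟪U, W⟫)
           - 4 * ‖Y‖ ^ 2 * ⟪Y, X⟫ * (⟪Y, W⟫ * ⟪U, X⟫ + ⟪Y, U⟫ * ⟪W, X⟫)))) 0 := by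
  have hn := hasDerivAt_norm_add_smul U hY
  have ha := hasDerivAt_inner_add_smul_left Y U W 0
  have hb := hasDerivAt_inner_add_smul_right X Y U 0
  have hnum := ((hn.pow 2).const_mul 2).mul
    (((hn.sub (hb.const_mul 2)).mul ha).add ((hn.pow 2).mul_const ⟪X, W⟫))
  unfold dirDerivSq
  refine (hnum.div ((hn.sub hb).pow 3) (by simpa using pow_ne_zero 3 hD)).congr_deriv ?_
  simp only [Pi.sub_apply, Pi.pow_apply, zero_smul, add_zero]
  norm_num
  rw [real_inner_comm U X, real_inner_comm W X, real_inner_comm Y X]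
  field_simp
  ring

theorem sq_rpow_three_halves {x : ℝ} (hx : 0 ≤ x) : (x ^ 2) ^ ((3 : ℝ) / 2) = x ^ 3 := by
  rw [← Real.rpow_natCast, ← Real.rpow_mul hx]
  norm_num

end Matsumoto

open Matsumoto

theorem matsumoto_fundamental_tensor_formula_general
    {V : Type*} [NormedAddCommGroup V] [InnerProductSpace ℝ V]
    (X : V) (hX : ‖X‖ < 1 / 2) (Y U W : V) (hY : Y ≠ 0) :
    matsumotoG X Y U W =
      (Real.sqrt ⟪Y, Y⟫ - ⟪X, Y⟫) ^ (-2 : ℤ) *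
        (4 * ⟪Y, U⟫ * ⟪Y, W⟫ + 2 * ⟪Y, Y⟫ * ⟪U, W⟫)
      + (Real.sqrt ⟪Y, Y⟫ - ⟪X, Y⟫) ^ (-4 : ℤ) *
        (- 4 * ⟪Y, Y⟫ * ⟪Y, U⟫ * ⟪Y, W⟫
         + ⟪Y, Y⟫ ^ ((3 : ℝ) / 2) * (⟪Y, W⟫ * ⟪U, X⟫ + ⟪Y, U⟫ * ⟪W, X⟫)
         + ⟪Y, Y⟫ ^ 2 * (3 * ⟪U, X⟫ * ⟪W, X⟫ - ⟪U, W⟫)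
         + Real.sqrt ⟪Y, Y⟫ * ⟪Y, X⟫ * (7 * ⟪Y, U⟫ * ⟪Y, W⟫ + ⟪Y, Y⟫ * ⟪U, W⟫)
         - 4 * ⟪Y, Y⟫ * ⟪Y, X⟫ * (⟪Y, W⟫ * ⟪U, X⟫ + ⟪Y, U⟫ * ⟪W, X⟫)) := by
  have hD : ‖Y‖ - ⟪X, Y⟫ ≠ 0 := (norm_sub_inner_pos (by linarith) hY).ne'
  rw [matsumotoG, (deriv_matsumotoF_sq_eventuallyEq X U W hY hD).deriv_eq,
    (hasDerivAt_dirDerivSq_add_smul X U W hY hD).deriv, ← norm_eq_sqrt_real_inner,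
    real_inner_self_eq_norm_sq, sq_rpow_three_halves (norm_nonneg Y)]
  ring

theorem matsumoto_fundamental_tensor_formula
    {V : Type*} [NormedAddCommGroup V] [InnerProductSpace ℝ V] [FiniteDimensional ℝ V]
    (X : V) (hX : ‖X‖ < 1 / 2) (Y U W : V) (hY : Y ≠ 0) :
    matsumotoG X Y U W =
      (Real.sqrt ⟪Y, Y⟫ - ⟪X, Y⟫) ^ (-2 : ℤ) *
        (4 * ⟪Y, U⟫ * ⟪Y, W⟫ + 2 * ⟪Y, Y⟫ * ⟪U, W⟫)
      + (Real.sqrt ⟪Y, Y⟫ - ⟪X, Y⟫) ^ (-4 : ℤ) *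
        (- 4 * ⟪Y, Y⟫ * ⟪Y, U⟫ * ⟪Y, W⟫
         + ⟪Y, Y⟫ ^ ((3 : ℝ) / 2) * (⟪Y, W⟫ * ⟪U, X⟫ + ⟪Y, U⟫ * ⟪W, X⟫)
         + ⟪Y, Y⟫ ^ 2 * (3 * ⟪U, X⟫ * ⟪W, X⟫ - ⟪U, W⟫)
         + Real.sqrt ⟪Y, Y⟫ * ⟪Y, X⟫ * (7 * ⟪Y, U⟫ * ⟪Y, W⟫ + ⟪Y, Y⟫ * ⟪U, W⟫)
         - 4 * ⟪Y, Y⟫ * ⟪Y, X⟫ * (⟪Y, W⟫ * ⟪U, X⟫ + ⟪Y, U⟫ * ⟪W, X⟫)) :=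
  matsumoto_fundamental_tensor_formula_general X hX Y U W hY
end

section
/- Let Y, U ∈ V be orthonormal (⟨Y,Y⟩ = ⟨U,U⟩ = 1, ⟨Y,U⟩ = 0) and let W ∈ V be arbitrary. Then g_Y(W,U) = 2⟨W,U⟩/(1 − ⟨Y,X⟩)² + (1 − ⟨Y,X⟩)^{-4}·{ ⟨W,Y⟩⟨U,X⟩ + 3⟨W,X⟩⟨U,X⟩ − ⟨W,U⟩ + ⟨Y,X⟩⟨W,U⟩ − 4⟨Y,X⟩⟨W,Y⟩⟨U,X⟩ }. -/
open scoped RealInnerProductSpace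

/-!
Writing `F(y) = ‖y‖² / (‖y‖ - ⟪X, y⟫)` and `F'(y) u` for its derivative at `y` along `u`, the
inner derivative is `∂ₜ F²(y + t U) = 2 F(y) F'(y) U`, so `g_Y(W, U)` is the derivative at `s = 0`
of `s ↦ F(Y + s W) · F'(Y + s W) U`, i.e. `F'(Y) W · F'(Y) U + F(Y) · ∂ₛ F'(Y + s W) U`.
At a unit vector `Y` orthogonal to `U` each of these terms is an explicit rational function of
`⟪X, Y⟫`, and the formula follows by clearing denominators.
-/

open scoped Topology

section Matsumoto

variable {V : Type*} [NormedAddCommGroup V] [InnerProductSpace ℝ V]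

theorem hasDerivAt_line (y w : V) (s : ℝ) : HasDerivAt (fun s : ℝ => y + s • w) w s := by
  simpa using ((hasDerivAt_id s).smul_const w).const_add y

theorem HasDerivAt.norm {γ : ℝ → V} {v : V} {t : ℝ} (hγ : HasDerivAt γ v t) (h0 : γ t ≠ 0) :
    HasDerivAt (fun s => ‖γ s‖) (⟪γ t, v⟫ / ‖γ t‖) t := by
  have h := hγ.norm_sq.sqrt (by positivity)
  simp only [Real.sqrt_sq (norm_nonneg _)] at h
  convert h using 1
  field_simp

theorem HasDerivAt.inner_const_left (X : V) {γ : ℝ → V} {v : V} {t : ℝ}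
    (hγ : HasDerivAt γ v t) : HasDerivAt (fun s => ⟪X, γ s⟫) ⟪X, v⟫ t := by
  simpa using (hasDerivAt_const t X).inner ℝ hγ

theorem matsumotoF_eq (X y : V) : matsumotoF X y = ‖y‖ ^ 2 / (‖y‖ - ⟪X, y⟫) := by
  rw [matsumotoF, real_inner_self_eq_norm_sq, Real.sqrt_sq (norm_nonneg y)]

theorem inner_lt_norm_of_norm_lt_one {X y : V} (hX : ‖X‖ < 1) (hy : y ≠ 0) : ⟪X, y⟫ < ‖y‖ :=
  calc ⟪X, y⟫ ≤ ‖X‖ * ‖y‖ := real_inner_le_norm X y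
    _ < 1 * ‖y‖ := by gcongr
    _ = ‖y‖ := one_mul _

noncomputable def matsumotoFDeriv (X y u : V) : ℝ :=
  (⟪y, u⟫ * (‖y‖ - 2 * ⟪X, y⟫) + ‖y‖ ^ 2 * ⟪X, u⟫) / (‖y‖ - ⟪X, y⟫) ^ 2

theorem HasDerivAt.matsumotoF (X : V) {γ : ℝ → V} {v : V} {t : ℝ} (hγ : HasDerivAt γ v t)
    (h0 : γ t ≠ 0) (hden : ‖γ t‖ - ⟪X, γ t⟫ ≠ 0) :
    HasDerivAt (fun s => matsumotoF X (γ s)) (matsumotoFDeriv X (γ t) v) t := by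
  have hn := hγ.norm h0
  have h := (hn.fun_pow 2).fun_div (hn.fun_sub (hγ.inner_const_left X)) hden
  simp only [matsumotoF_eq]
  refine h.congr_deriv ?_
  have : ‖γ t‖ ≠ 0 := norm_ne_zero_iff.2 h0
  rw [matsumotoFDeriv, real_inner_comm]
  field_simp
  ring

theorem hasDerivAt_matsumotoFDeriv_line (X : V) {y u : V} (w : V) (hy : ‖y‖ = 1)
    (hyu : ⟪y, u⟫ = 0) (hXy : ⟪X, y⟫ ≠ 1) :
    HasDerivAt (fun s : ℝ => matsumotoFDeriv X (y + s • w) u)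
      (((⟪w, u⟫ * (1 - 2 * ⟪X, y⟫) + 2 * ⟪y, w⟫ * ⟪X, u⟫) * (1 - ⟪X, y⟫)
        - 2 * ⟪X, u⟫ * (⟪y, w⟫ - ⟪X, w⟫)) / (1 - ⟪X, y⟫) ^ 3) 0 := by
  have hγ := hasDerivAt_line y w 0
  have hγ0 : y + (0 : ℝ) • w = y := by simp
  have hXy' : 1 - ⟪X, y⟫ ≠ 0 := sub_ne_zero.2 hXy.symm
  have hn := hγ.norm (by simp [← norm_ne_zero_iff, hy])
  have hb := hγ.inner_const_left X
  have ha : HasDerivAt (fun s : ℝ => ⟪y + s • w, u⟫) ⟪w, u⟫ 0 := by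
    simpa using hγ.inner ℝ (hasDerivAt_const 0 u)
  have hden : (‖y + (0 : ℝ) • w‖ - ⟪X, y + (0 : ℝ) • w⟫) ^ 2 ≠ 0 := by
    rw [hγ0, hy]; exact pow_ne_zero _ hXy'
  have hnum := (ha.fun_mul (hn.fun_sub (hb.const_mul 2))).fun_add ((hn.fun_pow 2).mul_const ⟪X, u⟫)
  have h := hnum.fun_div ((hn.fun_sub hb).fun_pow 2) hden
  refine h.congr_deriv ?_
  simp only [hγ0, hy, hyu]
  field_simp
  ring

theorem matsumotoG_eq_deriv {X : V} (hX : ‖X‖ < 1) {Y : V} (hY : Y ≠ 0) (U W : V) :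
    matsumotoG X Y U W =
      deriv (fun s : ℝ => matsumotoF X (Y + s • U) * matsumotoFDeriv X (Y + s • U) W) 0 := by
  have hne : ∀ᶠ s : ℝ in 𝓝 0, Y + s • U ≠ 0 :=
    (hasDerivAt_line Y U 0).continuousAt.eventually_ne (by simpa using hY)
  have hinner : (fun s : ℝ => deriv (fun t : ℝ => matsumotoF X (Y + s • U + t • W) ^ 2) 0)
      =ᶠ[𝓝 0] fun s => 2 * (matsumotoF X (Y + s • U) * matsumotoFDeriv X (Y + s • U) W) := by
    filter_upwards [hne] with s hs
    have hden := (sub_pos.2 (inner_lt_norm_of_norm_lt_one hX hs)).ne'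
    have h := ((hasDerivAt_line (Y + s • U) W 0).matsumotoF X (by simpa) (by simpa)).fun_pow 2
    simp only [zero_smul, add_zero] at h
    rw [h.deriv]
    ring
  rw [matsumotoG, hinner.deriv_eq, deriv_const_mul_field']
  ring

end Matsumoto

theorem matsumotoG_orthonormal_formula_general
    {V : Type*} [NormedAddCommGroup V] [InnerProductSpace ℝ V]
    (X : V) (hX : ‖X‖ < 1 / 2) (Y U W : V)
    (hY : ⟪Y, Y⟫ = 1) (hYU : ⟪Y, U⟫ = 0) :
    matsumotoG X Y W U =
      2 * ⟪W, U⟫ / (1 - ⟪Y, X⟫) ^ 2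
      + (1 - ⟪Y, X⟫) ^ (-4 : ℤ) *
        (⟪W, Y⟫ * ⟪U, X⟫ + 3 * ⟪W, X⟫ * ⟪U, X⟫ - ⟪W, U⟫
         + ⟪Y, X⟫ * ⟪W, U⟫ - 4 * ⟪Y, X⟫ * ⟪W, Y⟫ * ⟪U, X⟫) := by
  have hY1 : ‖Y‖ = 1 := by
    rwa [real_inner_self_eq_norm_sq, pow_eq_one_iff_of_nonneg (norm_nonneg Y) two_ne_zero] at hY
  have hY0 : Y ≠ 0 := norm_ne_zero_iff.1 (hY1 ▸ one_ne_zero)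
  have hX1 : ‖X‖ < 1 := by linarith
  have hXY : ⟪X, Y⟫ < 1 := hY1 ▸ inner_lt_norm_of_norm_lt_one hX1 hY0
  have hF := (hasDerivAt_line Y W 0).matsumotoF X (by simpa using hY0)
    (by simpa [hY1] using (sub_pos.2 hXY).ne')
  have hF' := hasDerivAt_matsumotoFDeriv_line X W hY1 hYU hXY.ne
  rw [matsumotoG_eq_deriv hX1 hY0, (hF.fun_mul hF').deriv]
  have : 1 - ⟪X, Y⟫ ≠ 0 := (sub_pos.2 hXY).ne'
  rw [real_inner_comm Y W, real_inner_comm X U, real_inner_comm X W, real_inner_comm X Y]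
  simp only [zero_smul, add_zero, matsumotoF_eq, matsumotoFDeriv, hY1, hYU, zpow_neg]
  field_simp
  ring

theorem matsumotoG_orthonormal_formula
    {V : Type*} [NormedAddCommGroup V] [InnerProductSpace ℝ V] [FiniteDimensional ℝ V]
    (X : V) (hX : ‖X‖ < 1 / 2) (Y U W : V)
    (hY : ⟪Y, Y⟫ = 1) (hU : ⟪U, U⟫ = 1) (hYU : ⟪Y, U⟫ = 0) :
    matsumotoG X Y W U =
      2 * ⟪W, U⟫ / (1 - ⟪Y, X⟫) ^ 2
      + (1 - ⟪Y, X⟫) ^ (-4 : ℤ) *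
        (⟪W, Y⟫ * ⟪U, X⟫ + 3 * ⟪W, X⟫ * ⟪U, X⟫ - ⟪W, U⟫
         + ⟪Y, X⟫ * ⟪W, U⟫ - 4 * ⟪Y, X⟫ * ⟪W, Y⟫ * ⟪U, X⟫) :=
  matsumotoG_orthonormal_formula_general X hX Y U W hY hYU
end

section
/- Let Y, U ∈ V be orthonormal (⟨Y,Y⟩ = ⟨U,U⟩ = 1, ⟨Y,U⟩ = 0). Then (1 − ⟨Y,X⟩)(1 − 2⟨Y,X⟩) + 2⟨U,X⟩² > 0, and consequently g_Y(Y,Y)·g_Y(U,U) − g_Y(Y,U)² > 0. -/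
/-!
`F` is positively homogeneous of degree one, so Euler's relation gives `g_Y(Y, W) = F(Y) · dF_Y(W)`.
Writing `f(u) = F(Y + uU)`, this yields `g_Y(Y,Y) = f(0)²`, `g_Y(Y,U) = f(0) f'(0)` and
`g_Y(U,U) = f'(0)² + f(0) f''(0)`, so the determinant is `f(0)³ f''(0)`. For orthonormal `Y, U`,
with `a = ⟨X,Y⟩` and `b = ⟨X,U⟩`, `f(u) = (1 + u²) / (√(1 + u²) - a - bu)`, whence `f(0) = 1/(1-a)`
and `f''(0) = ((1-a)(1-2a) + 2b²) / (1-a)³`; both are positive since `a ≤ ‖X‖ < 1/2`.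
-/

open scoped RealInnerProductSpace

open Filter Topology

lemma hasDerivAt_deriv_sq {f f' : ℝ → ℝ} {f'' x : ℝ}
    (hf : ∀ᶠ u in 𝓝 x, HasDerivAt f (f' u) u) (hf' : HasDerivAt f' f'' x) :
    HasDerivAt (deriv fun u => f u ^ 2) (2 * (f' x ^ 2 + f x * f'')) x := by
  have hderiv : (deriv fun u => f u ^ 2) =ᶠ[𝓝 x] fun u => 2 * (f u * f' u) := by
    filter_upwards [hf] with u hu
    rw [(hu.fun_pow 2).deriv]
    ring
  exact (((hf.self_of_nhds.fun_mul hf').const_mul 2).congr_deriv (by ring)).congr_of_eventuallyEq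
    hderiv

section Line

noncomputable def matsumotoLine (a b u : ℝ) : ℝ :=
  (1 + u ^ 2) / (√(1 + u ^ 2) - (a + b * u))

noncomputable def matsumotoLineDeriv (a b u : ℝ) : ℝ :=
  (b - 2 * a * u - b * u ^ 2 + u * √(1 + u ^ 2)) / (√(1 + u ^ 2) - (a + b * u)) ^ 2

variable {a b : ℝ}

lemma hasDerivAt_matsumotoLine {u : ℝ} (hu : √(1 + u ^ 2) - (a + b * u) ≠ 0) :
    HasDerivAt (matsumotoLine a b) (matsumotoLineDeriv a b u) u := by
  have hpos : 0 < 1 + u ^ 2 := by positivity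
  have hN : HasDerivAt (fun u : ℝ => 1 + u ^ 2) (2 * u) u := by
    simpa using (hasDerivAt_pow 2 u).const_add 1
  have hD : HasDerivAt (fun u : ℝ => √(1 + u ^ 2) - (a + b * u))
      (2 * u / (2 * √(1 + u ^ 2)) - b) u := by
    have hL : HasDerivAt (fun u : ℝ => a + b * u) b u := by
      simpa using ((hasDerivAt_id' u).const_mul b).const_add a
    exact (hN.sqrt hpos.ne').fun_sub hL
  refine (hN.div hD hu).congr_deriv ?_
  have hsq : √(1 + u ^ 2) ^ 2 = 1 + u ^ 2 := Real.sq_sqrt hpos.le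
  have hsqrt : √(1 + u ^ 2) ≠ 0 := (Real.sqrt_pos.2 hpos).ne'
  rw [matsumotoLineDeriv, div_left_inj' (pow_ne_zero 2 hu)]
  field_simp
  linear_combination u * hsq

lemma hasDerivAt_matsumotoLineDeriv (ha : a ≠ 1) :
    HasDerivAt (matsumotoLineDeriv a b) (((1 - a) * (1 - 2 * a) + 2 * b ^ 2) / (1 - a) ^ 3) 0 := by
  have hr : HasDerivAt (fun u : ℝ => √(1 + u ^ 2)) 0 0 := by
    simpa using ((hasDerivAt_pow 2 (0 : ℝ)).const_add 1).sqrt (by norm_num)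
  have hP : HasDerivAt (fun u : ℝ => b - 2 * a * u - b * u ^ 2 + u * √(1 + u ^ 2))
      (1 - 2 * a) 0 := by
    refine (((((hasDerivAt_id' (0 : ℝ)).const_mul (2 * a)).const_sub b).fun_sub
      ((hasDerivAt_pow 2 (0 : ℝ)).const_mul b)).fun_add
        ((hasDerivAt_id' (0 : ℝ)).fun_mul hr)).congr_deriv ?_
    simp only [mul_one, Nat.cast_ofNat, Nat.add_one_sub_one, pow_one, mul_zero, sub_zero, ne_eq,
      OfNat.ofNat_ne_zero, not_false_eq_true, zero_pow, add_zero, Real.sqrt_one]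
    ring
  have hD : HasDerivAt (fun u : ℝ => (√(1 + u ^ 2) - (a + b * u)) ^ 2) (2 * (1 - a) * -b) 0 := by
    have := (hr.fun_sub (((hasDerivAt_id' (0 : ℝ)).const_mul b).const_add a)).fun_pow 2
    simpa using this
  have h1a : 1 - a ≠ 0 := sub_ne_zero.2 (Ne.symm ha)
  refine (hP.div hD (by simpa using pow_ne_zero 2 h1a)).congr_deriv ?_
  simp only [ne_eq, OfNat.ofNat_ne_zero, not_false_eq_true, zero_pow, add_zero, Real.sqrt_one,
    mul_zero, sub_zero, mul_one, mul_neg, sub_neg_eq_add]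
  field_simp

lemma eventually_hasDerivAt_matsumotoLine (ha : a ≠ 1) :
    ∀ᶠ u in 𝓝 0, HasDerivAt (matsumotoLine a b) (matsumotoLineDeriv a b u) u := by
  have hD : ∀ᶠ u : ℝ in 𝓝 0, √(1 + u ^ 2) - (a + b * u) ≠ 0 := by
    refine ContinuousAt.eventually_ne (by fun_prop) ?_
    simpa [sub_eq_zero] using Ne.symm ha
  filter_upwards [hD] with u hu using hasDerivAt_matsumotoLine hu

end Line

section Matsumoto

variable {V : Type*} [NormedAddCommGroup V] [InnerProductSpace ℝ V]

lemma matsumotoF_smul (X y : V) {c : ℝ} (hc : 0 ≤ c) :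
    matsumotoF X (c • y) = c * matsumotoF X y := by
  simp only [matsumotoF, real_inner_smul_left, real_inner_smul_right, ← mul_assoc,
    Real.sqrt_mul (mul_self_nonneg c), Real.sqrt_mul_self hc, ← mul_sub]
  rcases hc.eq_or_lt with rfl | hc
  · simp
  · rw [mul_assoc, mul_div_mul_left _ _ hc.ne', mul_div_assoc]

lemma matsumotoF_add_smul {X Y U : V} (hY : ⟪Y, Y⟫ = 1) (hU : ⟪U, U⟫ = 1) (hYU : ⟪Y, U⟫ = 0) (u : ℝ) :
    matsumotoF X (Y + u • U) = matsumotoLine ⟪X, Y⟫ ⟪X, U⟫ u := by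
  have hnorm : ⟪Y + u • U, Y + u • U⟫ = 1 + u ^ 2 := by
    simp only [inner_add_left, inner_add_right, real_inner_smul_left, real_inner_smul_right,
      real_inner_comm Y U, hY, hU, hYU]
    ring
  rw [matsumotoF, matsumotoLine, hnorm, inner_add_right, real_inner_smul_right, mul_comm u]

lemma matsumotoG_self_left (X Y W : V) {d : ℝ}
    (hd : HasDerivAt (fun u : ℝ => matsumotoF X (Y + u • W)) d 0) :
    matsumotoG X Y Y W = matsumotoF X Y * d := by
  have hinner : ∀ᶠ s : ℝ in 𝓝 0,
      deriv (fun t : ℝ => matsumotoF X (Y + s • Y + t • W) ^ 2) 0 =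
        2 * (1 + s) * (matsumotoF X Y * d) := by
    filter_upwards [eventually_gt_nhds (neg_lt_zero.2 one_pos)] with s hs
    have hs : 0 < 1 + s := by linarith
    have hscale : (fun t : ℝ => matsumotoF X (Y + s • Y + t • W) ^ 2) =
        fun t => (1 + s) ^ 2 * matsumotoF X (Y + (t / (1 + s)) • W) ^ 2 := by
      funext t
      rw [show Y + s • Y + t • W = (1 + s) • (Y + (t / (1 + s)) • W) by
        rw [smul_add, smul_smul, mul_div_cancel₀ _ hs.ne', add_smul, one_smul],
        matsumotoF_smul X _ hs.le]
      ring
    have hdiv : HasDerivAt (fun t : ℝ => t / (1 + s)) (1 / (1 + s)) 0 :=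
      (hasDerivAt_id 0).div_const _
    have hcomp := ((hd.comp_of_eq 0 hdiv (zero_div _).symm).fun_pow 2).const_mul ((1 + s) ^ 2)
    simp only [Function.comp_def] at hcomp
    rw [hscale, hcomp.deriv]
    simp only [zero_div, zero_smul, add_zero]
    field_simp
    ring
  have houter : HasDerivAt (fun s : ℝ => 2 * (1 + s) * (matsumotoF X Y * d))
      (2 * (matsumotoF X Y * d)) 0 := by
    simpa using (((hasDerivAt_id (0 : ℝ)).const_add 1).const_mul 2).mul_const
      (matsumotoF X Y * d)
  rw [matsumotoG, (houter.congr_of_eventuallyEq hinner).deriv]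
  ring

lemma matsumotoG_self (X Y : V) : matsumotoG X Y Y Y = matsumotoF X Y ^ 2 := by
  have hline : (fun u : ℝ => matsumotoF X (Y + u • Y)) =ᶠ[𝓝 0]
      fun u => (1 + u) * matsumotoF X Y := by
    filter_upwards [eventually_gt_nhds (neg_lt_zero.2 one_pos)] with u hu
    rw [show Y + u • Y = (1 + u) • Y by module, matsumotoF_smul X Y (by linarith)]
  have hd : HasDerivAt (fun u => (1 + u) * matsumotoF X Y) (matsumotoF X Y) 0 := by
    simpa using ((hasDerivAt_id (0 : ℝ)).const_add 1).mul_const (matsumotoF X Y)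
  rw [matsumotoG_self_left X Y Y (hd.congr_of_eventuallyEq hline), sq]

lemma matsumotoG_diag (X Y W : V) :
    matsumotoG X Y W W = deriv (deriv fun u : ℝ => matsumotoF X (Y + u • W) ^ 2) 0 / 2 := by
  have hshift (s : ℝ) : deriv (fun t : ℝ => matsumotoF X (Y + s • W + t • W) ^ 2) 0 =
      deriv (fun u : ℝ => matsumotoF X (Y + u • W) ^ 2) s := by
    simp_rw [add_assoc, ← add_smul]
    simpa using deriv_comp_const_add (fun u : ℝ => matsumotoF X (Y + u • W) ^ 2) s 0
  simp only [matsumotoG, hshift]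
  ring

theorem matsumotoG_det_eq (X Y U : V) {f' : ℝ → ℝ} {f'' : ℝ}
    (hf : ∀ᶠ u in 𝓝 0, HasDerivAt (fun u : ℝ => matsumotoF X (Y + u • U)) (f' u) u)
    (hf' : HasDerivAt f' f'' 0) :
    matsumotoG X Y Y Y * matsumotoG X Y U U - matsumotoG X Y Y U ^ 2 =
      matsumotoF X Y ^ 3 * f'' := by
  have hUU := (hasDerivAt_deriv_sq hf hf').deriv
  simp only [zero_smul, add_zero] at hUU
  rw [matsumotoG_self, matsumotoG_diag, hUU, matsumotoG_self_left X Y U hf.self_of_nhds]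
  ring

end Matsumoto


theorem matsumotoG_det_pos_general
    {V : Type*} [NormedAddCommGroup V] [InnerProductSpace ℝ V]
    (X : V) (hX : ‖X‖ < 1 / 2) (Y U : V)
    (hY : ⟪Y, Y⟫ = 1) (hU : ⟪U, U⟫ = 1) (hYU : ⟪Y, U⟫ = 0) :
    0 < (1 - ⟪Y, X⟫) * (1 - 2 * ⟪Y, X⟫) + 2 * ⟪U, X⟫ ^ 2 ∧
    0 < matsumotoG X Y Y Y * matsumotoG X Y U U - matsumotoG X Y Y U ^ 2 := by
  rw [real_inner_comm X Y, real_inner_comm X U]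
  set a := ⟪X, Y⟫
  set b := ⟪X, U⟫
  have hnormY : ‖Y‖ = 1 := by
    rw [norm_eq_sqrt_real_inner, hY, Real.sqrt_one]
  have ha : a < 1 / 2 := by
    have := real_inner_le_norm X Y
    rw [hnormY, mul_one] at this
    linarith
  have hQ : 0 < (1 - a) * (1 - 2 * a) + 2 * b ^ 2 := by
    have : 0 < (1 - a) * (1 - 2 * a) := mul_pos (by linarith) (by linarith)
    positivity
  have hFY : matsumotoF X Y = 1 / (1 - a) := by
    simpa [matsumotoLine] using matsumotoF_add_smul (X := X) hY hU hYU 0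
  have hf : ∀ᶠ u : ℝ in 𝓝 0,
      HasDerivAt (fun u : ℝ => matsumotoF X (Y + u • U)) (matsumotoLineDeriv a b u) u := by
    simpa only [matsumotoF_add_smul hY hU hYU] using
      eventually_hasDerivAt_matsumotoLine (b := b) (by linarith)
  refine ⟨hQ, ?_⟩
  rw [matsumotoG_det_eq X Y U hf (hasDerivAt_matsumotoLineDeriv (by linarith)), hFY]
  have : 0 < 1 - a := by linarith
  positivity

theorem matsumotoG_det_pos
    {V : Type*} [NormedAddCommGroup V] [InnerProductSpace ℝ V] [FiniteDimensional ℝ V]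
    (X : V) (hX : ‖X‖ < 1 / 2) (Y U : V)
    (hY : ⟪Y, Y⟫ = 1) (hU : ⟪U, U⟫ = 1) (hYU : ⟪Y, U⟫ = 0) :
    0 < (1 - ⟪Y, X⟫) * (1 - 2 * ⟪Y, X⟫) + 2 * ⟪U, X⟫ ^ 2 ∧
    0 < matsumotoG X Y Y Y * matsumotoG X Y U U - matsumotoG X Y Y U ^ 2 :=
  matsumotoG_det_pos_general X hX Y U hY hU hYU
end

section
/- In 𝔢(2) with the inner product λ²·(standard inner product on the basis {x,y,z}), a vector w = a·x + b·y + c·z (a,b,c ∈ ℝ) satisfies ∇_v w = 0 for all v ∈ 𝔢(2) if and only if a = b = 0; that is, the parallel vectors are exactly the multiples of z. -/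
/-- The bracket of the Lie algebra `𝔢(2)` of the group of rigid motions of the
Euclidean plane, in the basis `x = e₀, y = e₁, z = e₂` with
`[x,y] = 0`, `[y,z] = x`, `[z,x] = y`. -/
def e2Bracket (u v : Fin 3 → ℝ) : Fin 3 → ℝ :=
  ![u 1 * v 2 - u 2 * v 1, u 2 * v 0 - u 0 * v 2, 0]

/-- The inner product `λ² · (standard inner product)` on `𝔢(2)` in the basis `{x,y,z}`. -/
def inner3 (lam : ℝ) (u v : Fin 3 → ℝ) : ℝ :=
  lam ^ 2 * (u 0 * v 0 + u 1 * v 1 + u 2 * v 2)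

theorem e2_parallel_iff (lam : ℝ) (hlam : 0 < lam)
    -- the Levi-Civita (Koszul) connection of the metric `inner3 lam`
    (nabla : (Fin 3 → ℝ) → (Fin 3 → ℝ) → (Fin 3 → ℝ))
    (hK : ∀ u v w : Fin 3 → ℝ, 2 * inner3 lam (nabla u v) w =
      inner3 lam (e2Bracket u v) w - inner3 lam (e2Bracket v w) u
        + inner3 lam (e2Bracket w u) v)
    (a b c : ℝ) :
    (∀ v : Fin 3 → ℝ, nabla v ![a, b, c] = 0) ↔ (a = 0 ∧ b = 0) := by
  have hne : lam ≠ 0 := ne_of_gt hlam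
  constructor
  · intro h
    constructor
    · have h1 := hK ![0,0,1] ![a,b,c] ![0,1,0]
      rw [h ![0,0,1]] at h1
      simp [inner3, e2Bracket, hne] at h1
      have h2 : lam ^ 2 * (a + a) = 0 := by linarith
      have h3 := (mul_eq_zero.mp h2).resolve_left (pow_ne_zero 2 hne)
      linarith
    · have h1 := hK ![0,0,1] ![a,b,c] ![1,0,0]
      rw [h ![0,0,1]] at h1
      simp [inner3, e2Bracket, hne] at h1
      have h2 : lam ^ 2 * (b + b) = 0 := by linarith
      have h3 := (mul_eq_zero.mp h2).resolve_left (pow_ne_zero 2 hne)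
      linarith
  · rintro ⟨ha, hb⟩ v
    subst ha; subst hb
    funext i
    have key : ∀ w : Fin 3 → ℝ, 2 * inner3 lam (nabla v ![0,0,c]) w = 0 := by
      intro w
      rw [hK]
      simp [inner3, e2Bracket]
      ring
    fin_cases i
    · have h0 := key ![1,0,0]
      simp [inner3, hne] at h0
      simpa using h0
    · have h0 := key ![0,1,0]
      simp [inner3, hne] at h0
      simpa using h0
    · have h0 := key ![0,0,1]
      simp [inner3, hne] at h0
      simpa using h0
end

section
/- In 𝔢(2) with the inner product λ²·(standard inner product on the basis {x,y,z}), the curvature tensor of the Koszul connection vanishes identically: R(u,v)w = 0 for all u,v,w ∈ 𝔢(2). -/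
theorem e2_curvature_zero (lam : ℝ) (hlam : 0 < lam)
    -- the Levi-Civita (Koszul) connection of the metric `inner3 lam`
    (nabla : (Fin 3 → ℝ) → (Fin 3 → ℝ) → (Fin 3 → ℝ))
    (hK : ∀ u v w : Fin 3 → ℝ, 2 * inner3 lam (nabla u v) w =
      inner3 lam (e2Bracket u v) w - inner3 lam (e2Bracket v w) u
        + inner3 lam (e2Bracket w u) v) :
    ∀ u v w : Fin 3 → ℝ,
      nabla u (nabla v w) - nabla v (nabla u w) - nabla (e2Bracket u v) w = 0 := by
  have hl : (2:ℝ) * lam ^ 2 ≠ 0 := by positivity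
  have key : ∀ u v : Fin 3 → ℝ, nabla u v = ![-(u 2 * v 1), u 2 * v 0, 0] := by
    intro u v
    funext i
    fin_cases i
    · show nabla u v 0 = -(u 2 * v 1)
      have h := hK u v ![1, 0, 0]
      simp only [inner3, e2Bracket, Matrix.cons_val_zero, Matrix.cons_val_one,
        Matrix.head_cons, Matrix.cons_val_two, Matrix.tail_cons] at h ⊢
      exact mul_left_cancel₀ hl (by linear_combination h)
    · show nabla u v 1 = u 2 * v 0
      have h := hK u v ![0, 1, 0]
      simp only [inner3, e2Bracket, Matrix.cons_val_zero, Matrix.cons_val_one,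
        Matrix.head_cons, Matrix.cons_val_two, Matrix.tail_cons] at h ⊢
      exact mul_left_cancel₀ hl (by linear_combination h)
    · show nabla u v 2 = 0
      have h := hK u v ![0, 0, 1]
      simp only [inner3, e2Bracket, Matrix.cons_val_zero, Matrix.cons_val_one,
        Matrix.head_cons, Matrix.cons_val_two, Matrix.tail_cons] at h ⊢
      exact mul_left_cancel₀ hl (by linear_combination h)
  intro u v w
  simp only [key, e2Bracket]
  funext i
  fin_cases i <;>
    simp <;> ring
end
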